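/- arXiv:2101.12295 — 3 statements merged into one kernel-verified Lean document; each statement's English description precedes it below -/
import Mathlib

section
/- For the Laplacian on (a,b) with antiperiodic boundary conditions, whose eigenvalues are (2k−1)²π²/(b−a)² each with multiplicity 2 (k ∈ ℕ), ζ(n;T) = (2^{2n} − 1)(b−a)^{2n} |B_{2n}| / (2n)! for every n ∈ ℕ; in particular ζ(1;T) = (b−a)²/4, ζ(2;T) = (b−a)⁴/48, ζ(3;T) = (b−a)⁶/480, ζ(4;T) = 17(b−a)⁸/80640. -/
/-!
The eigenvalues are `(2k - 1)²π²/L²` with `L = b - a`, so `ζ(n; T) = 2 (L/π)^{2n} Σ_k (2k - 1)^{-2n}`.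
The even part of `ζ(2n) = Σ m^{-2n}` is `2^{-2n} ζ(2n)`, so the odd part is `(1 - 2^{-2n}) ζ(2n)`.
Euler's formula `ζ(2n) = (-1)^{n+1} 2^{2n-1} π^{2n} B_{2n} / (2n)!` finishes the computation, once
positivity of `ζ(2n)` has turned `(-1)^{n+1} B_{2n}` into `|B_{2n}|`.
-/

open Real

theorem bernoulli'_six : bernoulli' 6 = 1 / 42 := by
  rw [bernoulli'_def]
  norm_num [Finset.sum_range_succ, Nat.choose_eq_factorial_div_factorial, Nat.factorial,
    bernoulli'_eq_zero_of_odd]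

theorem bernoulli'_eight : bernoulli' 8 = -1 / 30 := by
  rw [bernoulli'_def]
  norm_num [Finset.sum_range_succ, Nat.choose_eq_factorial_div_factorial, Nat.factorial,
    bernoulli'_eq_zero_of_odd, bernoulli'_six]

theorem abs_bernoulli_two_mul {k : ℕ} (hk : k ≠ 0) :
    |(bernoulli (2 * k) : ℝ)| = (-1) ^ (k + 1) * bernoulli (2 * k) := by
  have hζ : 0 ≤ (-1 : ℝ) ^ (k + 1) * 2 ^ (2 * k - 1) * π ^ (2 * k) * bernoulli (2 * k) /
      (2 * k).factorial :=
    (hasSum_zeta_nat hk).nonneg fun n ↦ by positivity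
  have hsign : 0 ≤ (-1 : ℝ) ^ (k + 1) * bernoulli (2 * k) := by
    have hpos : (0 : ℝ) < 2 ^ (2 * k - 1) * π ^ (2 * k) / (2 * k).factorial := by positivity
    rw [show (-1 : ℝ) ^ (k + 1) * 2 ^ (2 * k - 1) * π ^ (2 * k) * bernoulli (2 * k) /
      (2 * k).factorial = (-1) ^ (k + 1) * bernoulli (2 * k) *
        (2 ^ (2 * k - 1) * π ^ (2 * k) / (2 * k).factorial) by ring] at hζ
    exact (mul_nonneg_iff_of_pos_right hpos).mp hζ
  rw [← abs_of_nonneg hsign, abs_mul, abs_pow, abs_neg, abs_one, one_pow, one_mul]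

theorem hasSum_zeta_nat_abs {k : ℕ} (hk : k ≠ 0) :
    HasSum (fun n : ℕ ↦ 1 / (n : ℝ) ^ (2 * k))
      (2 ^ (2 * k) * π ^ (2 * k) * |(bernoulli (2 * k) : ℝ)| / (2 * (2 * k).factorial)) := by
  have h2 : (2 : ℝ) ^ (2 * k) = 2 * 2 ^ (2 * k - 1) := by
    rw [← pow_succ']
    congr 1
    omega
  rw [abs_bernoulli_two_mul hk, h2]
  convert hasSum_zeta_nat hk using 1
  field_simp

theorem HasSum.one_div_odd_pow {m : ℕ} {Z : ℝ} (h : HasSum (fun n : ℕ ↦ 1 / (n : ℝ) ^ m) Z) :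
    HasSum (fun n : ℕ ↦ 1 / (2 * n + 1 : ℝ) ^ m) ((1 - (2 ^ m)⁻¹) * Z) := by
  set f : ℕ → ℝ := fun n ↦ 1 / (n : ℝ) ^ m with hf
  have heven : HasSum (fun n ↦ f (2 * n)) ((2 ^ m)⁻¹ * Z) := by
    refine (h.mul_left (2 ^ m)⁻¹).congr_fun fun n ↦ ?_
    simp only [hf]
    push_cast
    rw [mul_pow, one_div, one_div, mul_inv]
  have hinj : Function.Injective fun n : ℕ ↦ 2 * n + 1 := fun x y hxy ↦ by simpa using hxy
  have hodd : Summable fun n ↦ f (2 * n + 1) := h.summable.comp_injective hinj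
  have hsplit : (2 ^ m)⁻¹ * Z + ∑' n, f (2 * n + 1) = Z :=
    (heven.even_add_odd hodd.hasSum).unique h
  rw [show (1 - (2 ^ m)⁻¹) * Z = ∑' n, f (2 * n + 1) by linarith]
  convert hodd.hasSum using 2 with n
  simp [hf]

theorem hasSum_one_div_odd_pow_two_mul {k : ℕ} (hk : k ≠ 0) :
    HasSum (fun n : ℕ ↦ 1 / (2 * n + 1 : ℝ) ^ (2 * k))
      ((2 ^ (2 * k) - 1) * π ^ (2 * k) * |(bernoulli (2 * k) : ℝ)| / (2 * (2 * k).factorial)) := by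
  convert (hasSum_zeta_nat_abs hk).one_div_odd_pow using 1
  field_simp

theorem two_mul_tsum_inv_odd_sq_mul_pi_sq_div_pow (L : ℝ) {n : ℕ} (hn : n ≠ 0) :
    2 * ∑' k : ℕ+, (((2 * (k : ℝ) - 1) ^ 2 * π ^ 2 / L ^ 2) ^ n)⁻¹ =
      (2 ^ (2 * n) - 1) * L ^ (2 * n) * |(bernoulli (2 * n) : ℝ)| / (2 * n).factorial := by
  have hterm : ∀ x : ℝ, ((x ^ 2 * π ^ 2 / L ^ 2) ^ n)⁻¹ =
      L ^ (2 * n) / π ^ (2 * n) * (1 / x ^ (2 * n)) := by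
    intro x
    rw [div_pow, mul_pow, inv_div, ← pow_mul, ← pow_mul, ← pow_mul]
    ring
  have hodd : ∀ m : ℕ, 2 * ((m + 1 : ℕ) : ℝ) - 1 = 2 * m + 1 := fun m ↦ by push_cast; ring
  rw [tsum_pnat_eq_tsum_succ (f := fun m : ℕ ↦ (((2 * (m : ℝ) - 1) ^ 2 * π ^ 2 / L ^ 2) ^ n)⁻¹)]
  simp only [hterm, hodd]
  rw [tsum_mul_left, (hasSum_one_div_odd_pow_two_mul hn).tsum_eq]
  field_simp

theorem antiperiodic_laplacian_zeta_general (a b : ℝ) :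
    (∀ n : ℕ, 1 ≤ n →
      2 * ∑' k : ℕ+, (((2 * (k : ℝ) - 1)^2 * Real.pi^2 / (b - a)^2)^n)⁻¹ =
        (2^(2*n) - 1) * (b - a)^(2*n) * |(bernoulli (2*n) : ℝ)| / (Nat.factorial (2*n))) ∧
    2 * ∑' k : ℕ+, (((2 * (k : ℝ) - 1)^2 * Real.pi^2 / (b - a)^2))⁻¹ = (b - a)^2 / 4 ∧
    2 * ∑' k : ℕ+, (((2 * (k : ℝ) - 1)^2 * Real.pi^2 / (b - a)^2)^2)⁻¹ = (b - a)^4 / 48 ∧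
    2 * ∑' k : ℕ+, (((2 * (k : ℝ) - 1)^2 * Real.pi^2 / (b - a)^2)^3)⁻¹ = (b - a)^6 / 480 ∧
    2 * ∑' k : ℕ+, (((2 * (k : ℝ) - 1)^2 * Real.pi^2 / (b - a)^2)^4)⁻¹ =
      17 * (b - a)^8 / 80640 := by
  have zeta n (hn : n ≠ 0) := two_mul_tsum_inv_odd_sq_mul_pi_sq_div_pow (b - a) hn
  have hB k (hk : k ≠ 1) : bernoulli k = bernoulli' k := bernoulli_eq_bernoulli'_of_ne_one hk
  refine ⟨fun n hn ↦ zeta n (Nat.one_le_iff_ne_zero.mp hn), ?_, ?_, ?_, ?_⟩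
  · have zeta_one := zeta 1 one_ne_zero
    simp only [pow_one] at zeta_one
    rw [zeta_one]
    norm_num [Nat.factorial]
    ring
  · rw [zeta 2 two_ne_zero, hB 4 (by decide), bernoulli'_four]
    norm_num [Nat.factorial]
    ring
  · rw [zeta 3 three_ne_zero, hB 6 (by decide), bernoulli'_six]
    norm_num [Nat.factorial]
    ring
  · rw [zeta 4 four_ne_zero, hB 8 (by decide), bernoulli'_eight]
    norm_num [Nat.factorial]
    ring

/-- For the antiperiodic Laplacian on `(a,b)`, whose eigenvalues are
`(2k−1)²π²/(b−a)²` each with multiplicity 2, one has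
`ζ(n;T) = (2^{2n} − 1)(b−a)^{2n} |B_{2n}| / (2n)!` for every `n ≥ 1`; in particular
`ζ(1;T) = (b−a)²/4`, `ζ(2;T) = (b−a)⁴/48`, `ζ(3;T) = (b−a)⁶/480`,
`ζ(4;T) = 17(b−a)⁸/80640`. -/
theorem antiperiodic_laplacian_zeta (a b : ℝ) (hab : a < b) :
    (∀ n : ℕ, 1 ≤ n →
      2 * ∑' k : ℕ+, (((2 * (k : ℝ) - 1)^2 * Real.pi^2 / (b - a)^2)^n)⁻¹ =
        (2^(2*n) - 1) * (b - a)^(2*n) * |(bernoulli (2*n) : ℝ)| / (Nat.factorial (2*n))) ∧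
    2 * ∑' k : ℕ+, (((2 * (k : ℝ) - 1)^2 * Real.pi^2 / (b - a)^2))⁻¹ = (b - a)^2 / 4 ∧
    2 * ∑' k : ℕ+, (((2 * (k : ℝ) - 1)^2 * Real.pi^2 / (b - a)^2)^2)⁻¹ = (b - a)^4 / 48 ∧
    2 * ∑' k : ℕ+, (((2 * (k : ℝ) - 1)^2 * Real.pi^2 / (b - a)^2)^3)⁻¹ = (b - a)^6 / 480 ∧
    2 * ∑' k : ℕ+, (((2 * (k : ℝ) - 1)^2 * Real.pi^2 / (b - a)^2)^4)⁻¹ =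
      17 * (b - a)^8 / 80640 :=
  antiperiodic_laplacian_zeta_general a b
end

section
/- For V₀ > 0 and a bounded interval (a,b), Σ_{k=1}^∞ (k²π²/(b−a)² + V₀)^{−2} = [√V₀ (b−a) sinh(2√V₀(b−a)) − 2 cosh(2√V₀(b−a)) + 2V₀(b−a)² + 2] / [8V₀² sinh²(√V₀(b−a))]. -/
/-!
Evaluating the Mittag-Leffler expansion of `π cot (π z)` at `z = x i` gives
`∑_{k ≥ 1} 1 / (k² + x²) = (π coth (π x) - 1 / x) / (2 x)`. Differentiating in `x`, termwise
(the derivatives are bounded by `1 / k³` uniformly in `x`), yields `∑_{k ≥ 1} 1 / (k² + x²)²`,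
and the theorem is this sum at `x = √V₀ (b - a) / π`, rescaled by `((b - a) / π)⁴`.
-/

open Real Topology

namespace Complex

lemma cot_ofReal_mul_I (y : ℝ) :
    cot (y * I) = -((Real.cosh y / Real.sinh y : ℝ) : ℂ) * I := by
  rw [cot_eq_cos_div_sin, cos_mul_I, sin_mul_I]
  push_cast
  rw [div_mul_eq_div_div, div_I]
  ring

lemma ofReal_mul_I_mem_integerComplement {x : ℝ} (hx : x ≠ 0) :
    (x * I) ∈ integerComplement := by
  rintro ⟨n, hn⟩
  exact hx (by simpa using congrArg im hn.symm)

lemma one_div_ofReal_mul_I_sub_add_one_div_add {x : ℝ} (hx : x ≠ 0) (m : ℝ) :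
    1 / (x * I - m) + 1 / (x * I + m) =
      ((-(2 * x) * (m ^ 2 + x ^ 2)⁻¹ : ℝ) : ℂ) * I := by
  have hsub : (x * I - m) ≠ 0 := fun h => hx (by simpa using congrArg im h)
  have hadd : (x * I + m) ≠ 0 := fun h => hx (by simpa using congrArg im h)
  have hnorm : ((m ^ 2 + x ^ 2 : ℝ) : ℂ) ≠ 0 := by exact_mod_cast (by positivity)
  push_cast at hnorm ⊢
  field_simp
  linear_combination (2 * x ^ 3 * I) * I_sq

end Complex

lemma tsum_inv_succ_sq_add_sq {x : ℝ} (hx : x ≠ 0) :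
    ∑' n : ℕ, ((n + 1 : ℝ) ^ 2 + x ^ 2)⁻¹ =
      (π * (cosh (π * x) / sinh (π * x)) - x⁻¹) / (2 * x) := by
  have h := cot_series_rep' (Complex.ofReal_mul_I_mem_integerComplement hx)
  have hπx : (π : ℂ) * (x * Complex.I) = ((π * x : ℝ) : ℂ) * Complex.I := by push_cast; ring
  have hinv : 1 / ((x : ℂ) * Complex.I) = ((-x⁻¹ : ℝ) : ℂ) * Complex.I := by
    push_cast; rw [one_div, mul_inv, Complex.inv_I]; ring
  have hterm (n : ℕ) : 1 / (x * Complex.I - (n + 1)) + 1 / (x * Complex.I + (n + 1)) =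
      ((-(2 * x) * ((n + 1 : ℝ) ^ 2 + x ^ 2)⁻¹ : ℝ) : ℂ) * Complex.I := by
    exact_mod_cast Complex.one_div_ofReal_mul_I_sub_add_one_div_add hx (n + 1)
  simp_rw [hπx, Complex.cot_ofReal_mul_I, hinv, hterm, tsum_mul_right, ← Complex.ofReal_tsum,
    tsum_mul_left] at h
  have hreal : x⁻¹ - π * (cosh (π * x) / sinh (π * x)) =
      -(2 * x) * ∑' n : ℕ, ((n + 1 : ℝ) ^ 2 + x ^ 2)⁻¹ := by
    apply Complex.ofReal_injective
    apply mul_right_cancel₀ Complex.I_ne_zero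
    rw [← h]
    push_cast
    ring
  rw [eq_div_iff (mul_ne_zero two_ne_zero hx)]
  linear_combination hreal

lemma abs_neg_two_mul_div_sq_add_sq_sq_le {c : ℝ} (hc : 0 < c) (y : ℝ) :
    |-(2 * y) / (c ^ 2 + y ^ 2) ^ 2| ≤ (c ^ 3)⁻¹ := by
  have hamgm : 2 * c * |y| ≤ c ^ 2 + y ^ 2 := by
    nlinarith [sq_nonneg (c - |y|), sq_abs y]
  rw [abs_div, abs_neg, abs_mul, abs_two, abs_of_pos (by positivity : 0 < (c ^ 2 + y ^ 2) ^ 2),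
    ← one_div, div_le_div_iff₀ (by positivity) (by positivity)]
  nlinarith [mul_le_mul hamgm (le_add_of_nonneg_right (sq_nonneg y) : c ^ 2 ≤ c ^ 2 + y ^ 2)
    (by positivity) (by positivity)]

lemma hasDerivAt_tsum_inv_succ_sq_add_sq (x : ℝ) :
    HasDerivAt (fun y => ∑' n : ℕ, ((n + 1 : ℝ) ^ 2 + y ^ 2)⁻¹)
      (∑' n : ℕ, -(2 * x) / ((n + 1 : ℝ) ^ 2 + x ^ 2) ^ 2) x := by
  have hterm (n : ℕ) (y : ℝ) : HasDerivAt (fun y => ((n + 1 : ℝ) ^ 2 + y ^ 2)⁻¹)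
      (-(2 * y) / ((n + 1 : ℝ) ^ 2 + y ^ 2) ^ 2) y := by
    have hden : HasDerivAt (fun y => (n + 1 : ℝ) ^ 2 + y ^ 2) (2 * y) y := by
      simpa using (hasDerivAt_pow 2 y).const_add ((n + 1 : ℝ) ^ 2)
    exact hden.inv (by positivity)
  have hcube : Summable fun n : ℕ => ((n + 1 : ℝ) ^ 3)⁻¹ := by
    exact_mod_cast (summable_nat_add_iff 1).mpr (Real.summable_nat_pow_inv.mpr (by norm_num))
  have hsq : Summable fun n : ℕ => ((n + 1 : ℝ) ^ 2 + 0 ^ 2)⁻¹ := by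
    simpa using (summable_nat_add_iff 1).mpr (Real.summable_nat_pow_inv.mpr one_lt_two)
  exact hasDerivAt_tsum hcube hterm
    (fun n y => abs_neg_two_mul_div_sq_add_sq_sq_le (by positivity) y) hsq x

lemma hasDerivAt_pi_mul_coth_sub_inv_div {x : ℝ} (hx : x ≠ 0) :
    HasDerivAt (fun y => (π * (cosh (π * y) / sinh (π * y)) - y⁻¹) / (2 * y))
      (-(2 * x) * ((π ^ 2 * x + π * cosh (π * x) * sinh (π * x)) / (4 * x ^ 3 * sinh (π * x) ^ 2)
        - 1 / (2 * x ^ 4))) x := by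
  have hs : sinh (π * x) ≠ 0 := sinh_ne_zero.mpr (mul_ne_zero pi_ne_zero hx)
  have hmul : HasDerivAt (fun y => π * y) π x := by simpa using (hasDerivAt_id x).const_mul π
  have hcoth : HasDerivAt (fun y => cosh (π * y) / sinh (π * y))
      ((sinh (π * x) * π * sinh (π * x) - cosh (π * x) * (cosh (π * x) * π)) /
        sinh (π * x) ^ 2) x :=
    ((hasDerivAt_cosh _).comp x hmul).div ((hasDerivAt_sinh _).comp x hmul) hs
  have hden : HasDerivAt (fun y => 2 * y) 2 x := by simpa using (hasDerivAt_id x).const_mul 2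
  refine (((hcoth.const_mul π).sub (hasDerivAt_inv hx)).div hden
    (mul_ne_zero two_ne_zero hx)).congr_deriv ?_
  simp only [Pi.sub_apply]
  field_simp
  linear_combination (-4 * π ^ 2 * x ^ 2) * cosh_sq_sub_sinh_sq (π * x)

lemma tsum_pnat_inv_sq_add_sq_sq {x : ℝ} (hx : x ≠ 0) :
    ∑' k : ℕ+, (((k : ℝ) ^ 2 + x ^ 2) ^ 2)⁻¹ =
      (π ^ 2 * x + π * cosh (π * x) * sinh (π * x)) / (4 * x ^ 3 * sinh (π * x) ^ 2)
        - 1 / (2 * x ^ 4) := by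
  have heq : (fun y => ∑' n : ℕ, ((n + 1 : ℝ) ^ 2 + y ^ 2)⁻¹) =ᶠ[𝓝 x]
      fun y => (π * (cosh (π * y) / sinh (π * y)) - y⁻¹) / (2 * y) :=
    (eventually_ne_nhds hx).mono fun y hy => tsum_inv_succ_sq_add_sq hy
  have hderiv := ((hasDerivAt_tsum_inv_succ_sq_add_sq x).congr_of_eventuallyEq heq.symm).unique
    (hasDerivAt_pi_mul_coth_sub_inv_div hx)
  simp_rw [div_eq_mul_inv (-(2 * x)), tsum_mul_left] at hderiv
  rw [tsum_pnat_eq_tsum_succ (f := fun k : ℕ => (((k : ℝ) ^ 2 + x ^ 2) ^ 2)⁻¹)]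
  push_cast
  exact mul_left_cancel₀ (neg_ne_zero.mpr (mul_ne_zero two_ne_zero hx)) hderiv

/-- For `V₀ > 0` and `a < b`,
`Σ_{k=1}^∞ (k²π²/(b−a)² + V₀)⁻² = [√V₀(b−a) sinh(2√V₀(b−a)) − 2cosh(2√V₀(b−a))
+ 2V₀(b−a)² + 2] / [8V₀² sinh²(√V₀(b−a))]`. -/
theorem zeta_two_constant_potential (a b V₀ : ℝ) (hab : a < b) (hV : 0 < V₀) :
    ∑' k : ℕ+, (((k : ℝ)^2 * Real.pi^2 / (b - a)^2 + V₀)^2)⁻¹ =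
      (Real.sqrt V₀ * (b - a) * Real.sinh (2 * Real.sqrt V₀ * (b - a))
        - 2 * Real.cosh (2 * Real.sqrt V₀ * (b - a)) + 2 * V₀ * (b - a)^2 + 2)
      / (8 * V₀^2 * (Real.sinh (Real.sqrt V₀ * (b - a)))^2) := by
  have hL : b - a ≠ 0 := (sub_pos.mpr hab).ne'
  rw [show 2 * √V₀ * (b - a) = 2 * (√V₀ * (b - a)) by ring]
  set t := √V₀ * (b - a) with ht
  have ht0 : t ≠ 0 := mul_ne_zero (sqrt_pos.mpr hV).ne' hL
  have hV₀ : V₀ = t ^ 2 / (b - a) ^ 2 := by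
    rw [ht, mul_pow, sq_sqrt hV.le]
    field_simp
  have hterm (k : ℕ+) : (((k : ℝ) ^ 2 * π ^ 2 / (b - a) ^ 2 + V₀) ^ 2)⁻¹ =
      ((b - a) / π) ^ 4 * (((k : ℝ) ^ 2 + (t / π) ^ 2) ^ 2)⁻¹ := by
    rw [hV₀]
    field_simp
  rw [tsum_congr hterm, tsum_mul_left, tsum_pnat_inv_sq_add_sq_sq (div_ne_zero ht0 pi_ne_zero),
    mul_div_cancel₀ t pi_ne_zero, sinh_two_mul, cosh_two_mul, hV₀]
  have hs : sinh t ≠ 0 := sinh_ne_zero.mpr ht0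
  field_simp
  linear_combination 16 * cosh_sq_sub_sinh_sq t
end

section
/- For V₀ > 0 with V₀ ≠ k²π²/(b−a)² for all k ∈ ℕ, Σ_{k=1}^∞ (k²π²/(b−a)² − V₀)^{−1} = [√V₀ (a−b) cot(√V₀(b−a)) + 1] / (2V₀), where the series converges absolutely (interpreting terms as signed reals). -/
/-!
With `x = √V₀ (b - a) / π` the `k`-th term is `(b - a)² / π² · (k² - x²)⁻¹`, and
`∑ (k² - x²)⁻¹ = (1 - π x cot (π x)) / (2 x²)` is the Mittag-Leffler expansion of the cotangent,
`π cot (π x) = 1 / x + ∑ (1 / (x - k) + 1 / (x + k))`, after combining the partial fractions.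
-/

open Real

theorem Real.hasSum_cot_series {x : ℝ} (hx : ∀ n : ℤ, x ≠ n) :
    HasSum (fun n : ℕ+ => 1 / (x - n) + 1 / (x + n)) (π * cot (π * x) - 1 / x) := by
  have hxC : (x : ℂ) ∈ Complex.integerComplement := by
    rintro ⟨n, hn⟩
    exact hx n (by exact_mod_cast hn.symm)
  have hC := (summable_cotTerm hxC).hasSum_iff.mpr (cot_series_rep' hxC).symm
  rw [hasSum_pnat_iff_hasSum_succ (f := fun n : ℕ => 1 / (x - n) + 1 / (x + n)),
    ← Complex.hasSum_ofReal]
  convert hC using 1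
  · ext n; push_cast; rfl
  · push_cast [Complex.ofReal_cot]; rfl

theorem Real.hasSum_inv_sq_sub_sq {x : ℝ} (hx : ∀ n : ℤ, x ≠ n) :
    HasSum (fun n : ℕ+ => ((n : ℝ) ^ 2 - x ^ 2)⁻¹)
      ((1 - π * x * cot (π * x)) / (2 * x ^ 2)) := by
  have hx0 : x ≠ 0 := by simpa using hx 0
  have partial_fractions (n : ℕ+) :
      ((n : ℝ) ^ 2 - x ^ 2)⁻¹ = -(2 * x)⁻¹ * (1 / (x - n) + 1 / (x + n)) := by
    have h₁ : x - n ≠ 0 := sub_ne_zero.mpr (by exact_mod_cast hx n)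
    have h₂ : x + n ≠ 0 := by
      have := hx (-n); push_cast at this; intro h; exact this (by linarith)
    have h₃ : (n : ℝ) ^ 2 - x ^ 2 ≠ 0 := by
      rw [show (n : ℝ) ^ 2 - x ^ 2 = -((x - n) * (x + n)) by ring]
      exact neg_ne_zero.mpr (mul_ne_zero h₁ h₂)
    field_simp
    ring
  have value : -(2 * x)⁻¹ * (π * cot (π * x) - 1 / x) =
      (1 - π * x * cot (π * x)) / (2 * x ^ 2) := by
    field_simp
    ring
  rw [funext partial_fractions, ← value]
  exact (hasSum_cot_series hx).mul_left (-(2 * x)⁻¹)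

theorem Real.hasSum_inv_sq_mul_sub_sq {ω y : ℝ} (hω : ω ≠ 0) (hy : ∀ n : ℤ, y ≠ n * ω) :
    HasSum (fun n : ℕ+ => ((n * ω) ^ 2 - y ^ 2)⁻¹)
      ((1 - π * (y / ω) * cot (π * (y / ω))) / (2 * y ^ 2)) := by
  have hx : ∀ n : ℤ, y / ω ≠ n := fun n h => hy n (by rw [← h]; field_simp)
  have rescale (n : ℕ+) :
      ((n * ω) ^ 2 - y ^ 2)⁻¹ = (ω ^ 2)⁻¹ * ((n : ℝ) ^ 2 - (y / ω) ^ 2)⁻¹ := by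
    rw [← mul_inv, mul_sub, div_pow, mul_div_cancel₀ _ (pow_ne_zero 2 hω)]
    ring
  have value : (ω ^ 2)⁻¹ * ((1 - π * (y / ω) * cot (π * (y / ω))) / (2 * (y / ω) ^ 2)) =
      (1 - π * (y / ω) * cot (π * (y / ω))) / (2 * y ^ 2) := by
    field_simp
  rw [funext rescale, ← value]
  exact (hasSum_inv_sq_sub_sq hx).mul_left (ω ^ 2)⁻¹

/-- For `V₀ > 0` with `V₀ ≠ k²π²/(b−a)²` for all `k ∈ ℕ`, the series
`Σ_{k=1}^∞ (k²π²/(b−a)² − V₀)⁻¹` converges absolutely and equals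
`[√V₀ (a−b) cot(√V₀(b−a)) + 1] / (2V₀)`. -/
theorem trace_inverse_negative_constant_potential (a b V₀ : ℝ) (hab : a < b) (hV : 0 < V₀)
    (hne : ∀ k : ℕ+, V₀ ≠ (k : ℝ)^2 * Real.pi^2 / (b - a)^2) :
    Summable (fun k : ℕ+ => ((k : ℝ)^2 * Real.pi^2 / (b - a)^2 - V₀)⁻¹) ∧
    ∑' k : ℕ+, ((k : ℝ)^2 * Real.pi^2 / (b - a)^2 - V₀)⁻¹ =
      (Real.sqrt V₀ * (a - b) * Real.cot (Real.sqrt V₀ * (b - a)) + 1) / (2 * V₀) := by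
  have hL : b - a ≠ 0 := sub_ne_zero.mpr hab.ne'
  have hω : π / (b - a) ≠ 0 := div_ne_zero pi_ne_zero hL
  have hy : ∀ n : ℤ, √V₀ ≠ n * (π / (b - a)) := by
    intro n h
    have hn : 0 < n.natAbs :=
      Int.natAbs_pos.mpr (by rintro rfl; simp at h; linarith [sqrt_pos.mpr hV])
    refine hne ⟨n.natAbs, hn⟩ ?_
    rw [← sq_sqrt hV.le, h, PNat.mk_coe, Nat.cast_natAbs, Int.cast_abs, sq_abs, mul_pow,
      div_pow, mul_div_assoc]
  have hterm (k : ℕ+) :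
      ((k : ℝ)^2 * π^2 / (b - a)^2 - V₀)⁻¹ = ((k * (π / (b - a))) ^ 2 - √V₀ ^ 2)⁻¹ := by
    rw [sq_sqrt hV.le, mul_pow, div_pow, mul_div_assoc]
  have hangle : π * (√V₀ / (π / (b - a))) = √V₀ * (b - a) := by
    field_simp
  have hvalue :
      (1 - π * (√V₀ / (π / (b - a))) * cot (π * (√V₀ / (π / (b - a))))) / (2 * √V₀ ^ 2) =
        (√V₀ * (a - b) * cot (√V₀ * (b - a)) + 1) / (2 * V₀) := by
    rw [hangle, sq_sqrt hV.le]
    ring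
  have h := hasSum_inv_sq_mul_sub_sq hω hy
  rw [funext hterm, ← hvalue]
  exact ⟨h.summable, h.tsum_eq⟩
end
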